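/- Let K be an origin-symmetric convex body in ℝⁿ and α > 1/2, and suppose K̄_α is a position of K in α-regular P-typical position with constants (P̄_α, c), where P̄_α ≤ C/√(α − 1/2). Then for every integer k with 1 ≤ k ≤ n/2, when (F,E) is drawn from the Haar probability measure on the flag manifold G^k: d_G((P_F K̄_α) ∩ E, B₂^E) ≤ C′ (2α − 1)^{−1} (n/k)^{2α} with probability at least 1 − 2exp(−ck), and d_G(P_E(K̄_α ∩ F), B₂^E) ≤ C′ (2α − 1)^{−1} (n/k)^{2α} with probability at least 1 − 2exp(−ck). -/

import Mathlib

/-!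
For a flag `E ⊆ F` put `H = E ⊕ F⊥`. Then `H` has the dimension of `F`, and since `(F, E) ↦ H` is
measurable (by von Neumann's alternating projections, `P_{U ⊓ V} = lim (P_U P_V)^m`) and
`O(n)`-equivariant, `H` is Haar distributed just like `F`. Projecting,
`P_F K ∩ E = P_E (K ∩ H)`, and by duality `(P_F K)° = K° ∩ F`. Hence, off the two events
`diam (K° ∩ F) > D` and `diam (K ∩ H) > D`, each of probability at most `exp (-c k)` by
`P`-typicality, `D⁻¹ B_E ⊆ P_F K ∩ E ⊆ D B_E`, so `d_G ≤ D²` where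
`D = P̄ (n/k)^α ≤ C (n/k)^α / √(α - 1/2)`.
Since `E ⊕ H⊥ = F`, exchanging `K` with `K°` and `F` with `H` gives the bound for `P_E (K ∩ F)`.
-/

open MeasureTheory Metric Set
open scoped ENNReal Pointwise

noncomputable section

abbrev Euc (n : ℕ) : Type := EuclideanSpace ℝ (Fin n)

def projCLM {n : ℕ} (F : Submodule ℝ (Euc n)) : Euc n →L[ℝ] Euc n :=
  F.subtypeL.comp F.orthogonalProjection

instance {n : ℕ} : MeasurableSpace (Submodule ℝ (Euc n)) :=
  MeasurableSpace.comap (projCLM (n := n)) (borel (Euc n →L[ℝ] Euc n))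

def IsHaarGrassmannian (n m : ℕ) (σ : Measure (Submodule ℝ (Euc n))) : Prop :=
  IsProbabilityMeasure σ ∧
  σ {F : Submodule ℝ (Euc n) | Module.finrank ℝ F = m} = 1 ∧
  ∀ g : Euc n ≃ₗᵢ[ℝ] Euc n,
    Measure.map (fun F : Submodule ℝ (Euc n) =>
      F.map (g.toLinearEquiv : Euc n →ₗ[ℝ] Euc n)) σ = σ

/-- The Haar probability measure on the flag manifold
`G^k = {(F,E) : dim F = n-k+1, dim E = n-2k+2, E ⊆ F}`: an `O(n)`-invariant
probability measure concentrated on the flag manifold. -/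
def IsHaarFlag (n k : ℕ)
    (μ : Measure (Submodule ℝ (Euc n) × Submodule ℝ (Euc n))) : Prop :=
  IsProbabilityMeasure μ ∧
  μ {p : Submodule ℝ (Euc n) × Submodule ℝ (Euc n) |
      Module.finrank ℝ p.1 = n - k + 1 ∧ Module.finrank ℝ p.2 = n - 2 * k + 2 ∧ p.2 ≤ p.1} = 1 ∧
  ∀ g : Euc n ≃ₗᵢ[ℝ] Euc n,
    Measure.map (fun p : Submodule ℝ (Euc n) × Submodule ℝ (Euc n) =>
      (p.1.map (g.toLinearEquiv : Euc n →ₗ[ℝ] Euc n),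
       p.2.map (g.toLinearEquiv : Euc n →ₗ[ℝ] Euc n))) μ = μ

def IsSymmConvexBody {n : ℕ} (K : Set (Euc n)) : Prop :=
  IsCompact K ∧ Convex ℝ K ∧ (interior K).Nonempty ∧ K = -K

def polarBody {n : ℕ} (K : Set (Euc n)) : Set (Euc n) :=
  {y | ∀ x ∈ K, |(inner ℝ x y : ℝ)| ≤ 1}

def PTypicalPosition (n : ℕ) (α Pbar c : ℝ) (K : Set (Euc n)) : Prop :=
  ∀ k : ℕ, 1 ≤ k → k ≤ n →
    ∀ σ : Measure (Submodule ℝ (Euc n)), IsHaarGrassmannian n (n - k + 1) σ →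
      ∀ L ∈ ({K, polarBody K} : Set (Set (Euc n))),
        σ {F : Submodule ℝ (Euc n) |
            Pbar * ((n : ℝ) / (k : ℝ)) ^ α < Metric.diam (L ∩ (F : Set (Euc n)))}
          ≤ ENNReal.ofReal (Real.exp (-(c * k)))

/-- Geometric (Banach–Mazur type) distance between two origin-symmetric convex
bodies with the same linear hull: `inf {a b > 0 : b⁻¹ L ⊆ K ⊆ a L}`. -/
def geomDist {n : ℕ} (K L : Set (Euc n)) : ℝ :=
  sInf {d : ℝ | ∃ a b : ℝ, 0 < a ∧ 0 < b ∧ d = a * b ∧ b⁻¹ • L ⊆ K ∧ K ⊆ a • L}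

/-- The Euclidean unit ball of a subspace `E`. -/
def ballIn {n : ℕ} (E : Submodule ℝ (Euc n)) : Set (Euc n) :=
  (E : Set (Euc n)) ∩ Metric.closedBall 0 1

section AlternatingProjections

open Filter Topology

variable {E : Type*} [NormedAddCommGroup E] [InnerProductSpace ℝ E] [FiniteDimensional ℝ E]

theorem ContinuousLinearMap.norm_lt_one_of_norm_apply_lt {F : Type*} [NormedAddCommGroup F]
    [NormedSpace ℝ F] (T : E →L[ℝ] F) (h : ∀ x ≠ 0, ‖T x‖ < ‖x‖) : ‖T‖ < 1 := by
  rcases subsingleton_or_nontrivial E with hE | hE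
  · simp [Subsingleton.elim T 0]
  rw [← T.sSup_sphere_eq_norm]
  refine ((isCompact_sphere 0 1).sSup_lt_iff_of_continuous
    (NormedSpace.sphere_nonempty.2 zero_le_one) (by fun_prop) 1).2 fun x hx => ?_
  rw [mem_sphere_zero_iff_norm] at hx
  simpa [hx] using h x (by rintro rfl; simp at hx)

namespace Submodule

theorem starProjection_mul_starProjection_of_le {U V : Submodule ℝ E} (h : U ≤ V) :
    V.starProjection * U.starProjection = U.starProjection :=
  ContinuousLinearMap.ext fun x => starProjection_eq_self_iff.2 (h (starProjection_apply_mem U x))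

theorem norm_starProjection_mul_mul_orthogonal_inf_apply_lt (U V : Submodule ℝ E) {x : E}
    (hx : x ≠ 0) :
    ‖(U.starProjection * V.starProjection * (U ⊓ V)ᗮ.starProjection) x‖ < ‖x‖ := by
  set y := (U ⊓ V)ᗮ.starProjection x
  change ‖U.starProjection (V.starProjection y)‖ < ‖x‖
  by_contra! hle
  have hyx : ‖y‖ ≤ ‖x‖ := norm_starProjection_apply_le _ x
  have hyV : y ∈ V := (mem_iff_norm_starProjection V y).2 <| le_antisymm
    (norm_starProjection_apply_le _ _) (hyx.trans (hle.trans (norm_starProjection_apply_le _ _)))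
  rw [starProjection_eq_self_iff.2 hyV] at hle
  have hyU : y ∈ U := (mem_iff_norm_starProjection U y).2 <|
    le_antisymm (norm_starProjection_apply_le _ _) (hyx.trans hle)
  have hy0 : y = 0 := by
    simpa using (U ⊓ V).inf_orthogonal_eq_bot.le ⟨⟨hyU, hyV⟩, starProjection_apply_mem _ x⟩
  rw [hy0, map_zero, norm_zero] at hle
  exact hx (norm_le_zero_iff.1 hle)

theorem tendsto_starProjection_mul_pow (U V : Submodule ℝ E) :
    Tendsto (fun m : ℕ => (U.starProjection * V.starProjection) ^ m) atTop
      (𝓝 (U ⊓ V).starProjection) := by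
  set A := U.starProjection * V.starProjection
  set P := (U ⊓ V).starProjection
  set Q := (U ⊓ V)ᗮ.starProjection
  have hAP : A * P = P := by
    rw [mul_assoc, starProjection_mul_starProjection_of_le inf_le_right,
      starProjection_mul_starProjection_of_le inf_le_left]
  have hPA : P * A = P := by
    rw [← mul_assoc, ContinuousLinearMap.mul_def, ContinuousLinearMap.mul_def,
      starProjection_comp_starProjection_of_le inf_le_left,
      starProjection_comp_starProjection_of_le inf_le_right]
  have hQ : Q = 1 - P := starProjection_orthogonal' _
  have hcomm : Commute A Q := by
    simp only [hQ, Commute, SemiconjBy, mul_sub, sub_mul, mul_one, one_mul, hAP, hPA]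
  have hpow (m : ℕ) : A ^ m = (A * Q) ^ m * Q + P := by
    have hAmP : A ^ m * P = P := by
      induction m with
      | zero => simp
      | succ m ih => rw [pow_succ, mul_assoc, hAP, ih]
    rw [hcomm.mul_pow, mul_assoc, ← pow_succ, (isIdempotentElem_starProjection _).pow_succ_eq,
      hQ, mul_sub, mul_one, hAmP, sub_add_cancel]
  have hT : Tendsto (fun m : ℕ => (A * Q) ^ m) atTop (𝓝 0) :=
    tendsto_pow_atTop_nhds_zero_of_norm_lt_one <|
      ContinuousLinearMap.norm_lt_one_of_norm_apply_lt _ fun x hx =>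
        norm_starProjection_mul_mul_orthogonal_inf_apply_lt U V hx
  simpa [hpow] using (hT.mul_const Q).add_const P

end Submodule

end AlternatingProjections

section Flag

open Submodule

variable {n : ℕ}

theorem projCLM_eq_starProjection (F : Submodule ℝ (Euc n)) : projCLM F = F.starProjection := rfl

def flagPartner (p : Submodule ℝ (Euc n) × Submodule ℝ (Euc n)) : Submodule ℝ (Euc n) :=
  p.2 ⊔ p.1ᗮ

theorem finrank_flagPartner {p : Submodule ℝ (Euc n) × Submodule ℝ (Euc n)} (h : p.2 ≤ p.1) :
    Module.finrank ℝ (flagPartner p) + Module.finrank ℝ p.1 = Module.finrank ℝ p.2 + n := by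
  have hdisj : p.2 ⊓ p.1ᗮ = ⊥ := eq_bot_iff.2 fun x hx =>
    p.1.inf_orthogonal_eq_bot.le ⟨h hx.1, hx.2⟩
  have hsum := finrank_sup_add_finrank_inf_eq p.2 p.1ᗮ
  have hcompl := p.1.finrank_add_finrank_orthogonal
  rw [hdisj, finrank_bot, add_zero] at hsum
  rw [finrank_euclideanSpace_fin] at hcompl
  unfold flagPartner
  omega

theorem flagPartner_flagPartner {E F : Submodule ℝ (Euc n)} (h : E ≤ F) :
    flagPartner (flagPartner (F, E), E) = F := by
  rw [flagPartner, flagPartner, ← inf_orthogonal, orthogonal_orthogonal]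
  exact sup_orthogonal_inf_of_hasOrthogonalProjection h

theorem image_projCLM_inter_eq {K : Set (Euc n)} {E G : Submodule ℝ (Euc n)} (hEG : E ≤ G) :
    projCLM G '' K ∩ E = projCLM E '' (K ∩ flagPartner (G, E)) := by
  simp only [projCLM_eq_starProjection]
  ext z
  constructor
  · rintro ⟨⟨x, hxK, rfl⟩, hzE⟩
    refine ⟨x, ⟨hxK, mem_sup.2 ⟨_, hzE, _, G.sub_starProjection_mem_orthogonal x,
      add_sub_cancel _ _⟩⟩, ?_⟩
    calc E.starProjection x = E.starProjection (G.starProjection x) :=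
          (DFunLike.congr_fun (starProjection_comp_starProjection_of_le hEG) x).symm
      _ = G.starProjection x := starProjection_eq_self_iff.2 hzE
  · rintro ⟨x, ⟨hxK, hx⟩, rfl⟩
    obtain ⟨e, he, w, hw, rfl⟩ := mem_sup.1 hx
    have hEe : E.starProjection (e + w) = e := by
      rw [map_add, starProjection_eq_self_iff.2 he,
        (starProjection_apply_eq_zero_iff _).2 (orthogonal_le hEG hw), add_zero]
    have hGe : G.starProjection (e + w) = e := by
      rw [map_add, starProjection_eq_self_iff.2 (hEG he),
        (starProjection_apply_eq_zero_iff _).2 hw, add_zero]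
    exact ⟨⟨e + w, hxK, by rw [hGe, hEe]⟩, by rw [hEe]; exact he⟩

end Flag

section Measurability

variable {n : ℕ}

local instance : MeasurableSpace (Euc n →L[ℝ] Euc n) := borel _
local instance : BorelSpace (Euc n →L[ℝ] Euc n) := ⟨rfl⟩

theorem measurable_projCLM : Measurable (projCLM (n := n)) := fun _ hs => ⟨_, hs, rfl⟩

theorem measurable_submodule_of_measurable_projCLM {β : Type*} [MeasurableSpace β]
    {f : β → Submodule ℝ (Euc n)} (hf : Measurable fun b => projCLM (f b)) : Measurable f := by
  rintro _ ⟨s, hs, rfl⟩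
  exact hf hs

theorem measurable_orthogonal : Measurable fun F : Submodule ℝ (Euc n) => Fᗮ := by
  refine measurable_submodule_of_measurable_projCLM ?_
  simp only [projCLM_eq_starProjection, Submodule.starProjection_orthogonal']
  exact (continuous_const.sub continuous_id).measurable.comp measurable_projCLM

instance : MeasurableInf₂ (Submodule ℝ (Euc n)) where
  measurable_inf := measurable_submodule_of_measurable_projCLM <|
    measurable_of_tendsto_metrizable
      (fun m => ((continuous_fst.mul continuous_snd).pow m).measurable.comp
        ((measurable_projCLM.comp measurable_fst).prodMk (measurable_projCLM.comp measurable_snd)))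
      (tendsto_pi_nhds.2 fun p => Submodule.tendsto_starProjection_mul_pow p.1 p.2)

instance : MeasurableSup₂ (Submodule ℝ (Euc n)) where
  measurable_sup := by
    have h : (fun p : Submodule ℝ (Euc n) × Submodule ℝ (Euc n) => p.1 ⊔ p.2) =
        fun p : Submodule ℝ (Euc n) × Submodule ℝ (Euc n) => (p.1ᗮ ⊓ p.2ᗮ)ᗮ := by
      ext p : 1
      rw [Submodule.inf_orthogonal, Submodule.orthogonal_orthogonal]
    rw [h]
    exact measurable_orthogonal.comp <|
      (measurable_orthogonal.comp measurable_fst).inf (measurable_orthogonal.comp measurable_snd)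

theorem measurable_map_linearIsometryEquiv (g : Euc n ≃ₗᵢ[ℝ] Euc n) :
    Measurable fun F : Submodule ℝ (Euc n) => F.map (g.toLinearEquiv : Euc n →ₗ[ℝ] Euc n) := by
  refine measurable_submodule_of_measurable_projCLM ?_
  have h (F : Submodule ℝ (Euc n)) :
      projCLM (F.map (g.toLinearEquiv : Euc n →ₗ[ℝ] Euc n)) =
        (g : Euc n →L[ℝ] Euc n) * projCLM F * (g.symm : Euc n →L[ℝ] Euc n) :=
    ContinuousLinearMap.ext fun x => Submodule.starProjection_map_apply g F x
  simp only [h]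
  exact ((continuous_const.mul continuous_id).mul continuous_const).measurable.comp
    measurable_projCLM

end Measurability

section Haar

variable {n k : ℕ}

theorem measurable_flagPartner : Measurable (flagPartner (n := n)) :=
  measurable_snd.sup (measurable_orthogonal.comp measurable_fst)

theorem IsHaarFlag.isHaarGrassmannian_map {μ : Measure (Submodule ℝ (Euc n) × Submodule ℝ (Euc n))}
    (hμ : IsHaarFlag n k μ) {f : Submodule ℝ (Euc n) × Submodule ℝ (Euc n) → Submodule ℝ (Euc n)}
    (hf : Measurable f)
    (hequiv : ∀ (g : Euc n ≃ₗᵢ[ℝ] Euc n) p,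
      f (p.1.map (g.toLinearEquiv : Euc n →ₗ[ℝ] Euc n),
         p.2.map (g.toLinearEquiv : Euc n →ₗ[ℝ] Euc n))
        = (f p).map (g.toLinearEquiv : Euc n →ₗ[ℝ] Euc n))
    (hdim : ∀ p : Submodule ℝ (Euc n) × Submodule ℝ (Euc n), Module.finrank ℝ p.1 = n - k + 1 →
      Module.finrank ℝ p.2 = n - 2 * k + 2 → p.2 ≤ p.1 → Module.finrank ℝ (f p) = n - k + 1) :
    IsHaarGrassmannian n (n - k + 1) (μ.map f) := by
  obtain ⟨hprob, hflag, hinv⟩ := hμ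
  refine ⟨Measure.isProbabilityMeasure_map hf.aemeasurable, le_antisymm prob_le_one ?_, fun g => ?_⟩
  · calc (1 : ℝ≥0∞) = μ _ := hflag.symm
      _ ≤ μ (f ⁻¹' {F | Module.finrank ℝ F = n - k + 1}) :=
          measure_mono fun p hp => hdim p hp.1 hp.2.1 hp.2.2
      _ ≤ μ.map f {F | Module.finrank ℝ F = n - k + 1} := Measure.le_map_apply hf.aemeasurable _
  · have hg : Measurable fun p : Submodule ℝ (Euc n) × Submodule ℝ (Euc n) =>
        (p.1.map (g.toLinearEquiv : Euc n →ₗ[ℝ] Euc n),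
         p.2.map (g.toLinearEquiv : Euc n →ₗ[ℝ] Euc n)) :=
      ((measurable_map_linearIsometryEquiv g).comp measurable_fst).prodMk
        ((measurable_map_linearIsometryEquiv g).comp measurable_snd)
    rw [Measure.map_map (measurable_map_linearIsometryEquiv g) hf]
    conv_rhs => rw [← hinv g, Measure.map_map hf hg]
    exact congrArg (Measure.map · μ) (funext fun p => (hequiv g p).symm)

theorem IsHaarFlag.isHaarGrassmannian_map_fst
    {μ : Measure (Submodule ℝ (Euc n) × Submodule ℝ (Euc n))} (hμ : IsHaarFlag n k μ) :
    IsHaarGrassmannian n (n - k + 1) (μ.map Prod.fst) :=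
  hμ.isHaarGrassmannian_map measurable_fst (fun _ _ => rfl) fun _ h _ _ => h

theorem IsHaarFlag.isHaarGrassmannian_map_flagPartner
    {μ : Measure (Submodule ℝ (Euc n) × Submodule ℝ (Euc n))} (hμ : IsHaarFlag n k μ)
    (hk : 2 * k ≤ n) :
    IsHaarGrassmannian n (n - k + 1) (μ.map flagPartner) := by
  refine hμ.isHaarGrassmannian_map measurable_flagPartner (fun g p => ?_) fun p h1 h2 h => ?_
  · simp only [flagPartner, Submodule.map_sup, Submodule.map_orthogonal_equiv]
  · have := finrank_flagPartner h
    omega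

end Haar

section ConvexBody

variable {n : ℕ} {K : Set (Euc n)}

theorem IsSymmConvexBody.neg_mem (hK : IsSymmConvexBody K) {x : Euc n} (hx : x ∈ K) : -x ∈ K := by
  rw [hK.2.2.2]
  simpa using hx

theorem IsSymmConvexBody.zero_mem_interior (hK : IsSymmConvexBody K) :
    (0 : Euc n) ∈ interior K := by
  obtain ⟨x, hx⟩ := hK.2.2.1
  have hneg : -x ∈ interior K := by
    rw [hK.2.2.2, ← Set.neg_preimage]
    change -x ∈ interior (Homeomorph.neg (Euc n) ⁻¹' K)
    rw [← Homeomorph.preimage_interior]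
    simpa using hx
  simpa using hK.2.1.interior hx hneg (by norm_num : (0 : ℝ) ≤ 1 / 2)
    (by norm_num : (0 : ℝ) ≤ 1 / 2) (by norm_num)

theorem IsSymmConvexBody.zero_mem (hK : IsSymmConvexBody K) : (0 : Euc n) ∈ K :=
  interior_subset hK.zero_mem_interior

theorem IsSymmConvexBody.image (hK : IsSymmConvexBody K) (T : Euc n ≃ₗ[ℝ] Euc n) :
    IsSymmConvexBody (T '' K) := by
  refine ⟨hK.1.image (LinearMap.continuous_of_finiteDimensional T.toLinearMap),
    hK.2.1.linear_image T.toLinearMap, ?_, ?_⟩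
  · rw [show (T : Euc n → Euc n) = T.toContinuousLinearEquiv.toHomeomorph from rfl,
      ← Homeomorph.image_interior]
    exact hK.2.2.1.image _
  · ext x
    simp only [Set.mem_neg, Set.mem_image]
    constructor <;> rintro ⟨y, hy, hyx⟩ <;> exact ⟨-y, hK.neg_mem hy, by simp [hyx]⟩

theorem IsSymmConvexBody.isBounded_polarBody (hK : IsSymmConvexBody K) :
    Bornology.IsBounded (polarBody K) := by
  obtain ⟨r, hr, hball⟩ := Metric.mem_nhds_iff.1 (mem_interior_iff_mem_nhds.1 hK.zero_mem_interior)
  refine (isBounded_closedBall (x := (0 : Euc n)) (r := 2 / r)).subset fun v hv => ?_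
  rw [mem_closedBall_zero_iff, le_div_iff₀ hr]
  rcases eq_or_ne v 0 with rfl | hv0
  · simp
  have hvpos : 0 < ‖v‖ := norm_pos_iff.2 hv0
  have hx : (r / 2 / ‖v‖) • v ∈ K := hball <| by
    rw [mem_ball_zero_iff, norm_smul, Real.norm_of_nonneg (by positivity),
      div_mul_cancel₀ _ hvpos.ne']
    linarith
  have h := hv _ hx
  rw [real_inner_smul_left, real_inner_self_eq_norm_sq, abs_of_nonneg (by positivity)] at h
  field_simp at h
  linarith

end ConvexBody

section Duality

open Submodule

variable {n : ℕ}

theorem norm_le_of_diam_le {E : Type*} [SeminormedAddCommGroup E] {S : Set E} {x : E} {D : ℝ}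
    (hS : Bornology.IsBounded S) (h0 : 0 ∈ S) (hx : x ∈ S) (hD : diam S ≤ D) : ‖x‖ ≤ D := by
  simpa using (dist_le_diam_of_mem hS hx h0).trans hD

/-- A point of `G` outside `P_G K` is separated from it by an element of `K° ∩ G`, which is then
too long: the inclusion `(P_G K)° ⊆ K° ∩ G`. -/
theorem mem_image_projCLM_of_norm_le {K : Set (Euc n)} (hK : IsSymmConvexBody K)
    {G : Submodule ℝ (Euc n)} {D : ℝ} (hD : ∀ w ∈ polarBody K ∩ G, ‖w‖ ≤ D) {y : Euc n}
    (hyG : y ∈ G) (hy : ‖y‖ * D ≤ 1) : y ∈ projCLM G '' K := by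
  by_contra hyK
  have hconv : Convex ℝ (projCLM G '' K) := hK.2.1.linear_image (projCLM G).toLinearMap
  have hclosed : IsClosed (projCLM G '' K) := (hK.1.image (projCLM G).continuous).isClosed
  obtain ⟨f, u, hfu, huy⟩ := geometric_hahn_banach_closed_point hconv hclosed hyK
  have hu : 0 < u := by simpa using hfu 0 ⟨0, hK.zero_mem, map_zero _⟩
  set w := u⁻¹ • projCLM G ((InnerProductSpace.toDual ℝ (Euc n)).symm f)
  have hinner (x : Euc n) : inner ℝ x w = u⁻¹ * f (projCLM G x) := by
    rw [real_inner_smul_right, real_inner_comm, projCLM_eq_starProjection,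
      inner_starProjection_left_eq_right, InnerProductSpace.toDual_symm_apply]
  have hwpolar : w ∈ polarBody K := fun x hx => by
    have hlt := hfu _ ⟨x, hx, rfl⟩
    have hgt := hfu _ ⟨-x, hK.neg_mem hx, rfl⟩
    rw [map_neg, map_neg] at hgt
    rw [hinner, abs_mul, abs_of_pos (inv_pos.2 hu), inv_mul_le_one₀ hu]
    exact abs_le.2 ⟨by linarith, hlt.le⟩
  have hwD : ‖w‖ ≤ D := hD w ⟨hwpolar, G.smul_mem _ (G.starProjection_apply_mem _)⟩
  have hwy : 1 < inner ℝ y w := by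
    rw [hinner, projCLM_eq_starProjection, starProjection_eq_self_iff.2 hyG, ← div_eq_inv_mul,
      one_lt_div hu]
    exact huy
  have := (real_inner_le_norm y w).trans (mul_le_mul_of_nonneg_left hwD (norm_nonneg y))
  linarith

theorem geomDist_ballIn_le_mul_self {S : Set (Euc n)} {E : Submodule ℝ (Euc n)} {D : ℝ}
    (hD : 0 < D) (hball : ∀ y ∈ ballIn E, D⁻¹ • y ∈ S) (hS : ∀ z ∈ S, z ∈ E ∧ ‖z‖ ≤ D) :
    geomDist S (ballIn E) ≤ D * D := by
  refine csInf_le ⟨0, ?_⟩ ⟨D, D, hD, hD, rfl, ?_, fun z hz => ?_⟩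
  · rintro _ ⟨a, b, ha, hb, rfl, -, -⟩
    positivity
  · rintro _ ⟨y, hy, rfl⟩
    exact hball y hy
  · obtain ⟨hzE, hzD⟩ := hS z hz
    refine ⟨D⁻¹ • z, ⟨E.smul_mem _ hzE, ?_⟩, smul_inv_smul₀ hD.ne' z⟩
    rw [mem_closedBall_zero_iff, norm_smul, Real.norm_of_nonneg (inv_pos.2 hD).le,
      inv_mul_le_one₀ hD]
    exact hzD

theorem geomDist_image_projCLM_inter_ballIn_le {K : Set (Euc n)} (hK : IsSymmConvexBody K)
    {E G : Submodule ℝ (Euc n)} (hEG : E ≤ G) {D : ℝ} (hD : 0 < D)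
    (hpolar : diam (polarBody K ∩ G) ≤ D) (hbody : diam (K ∩ flagPartner (G, E)) ≤ D) :
    geomDist (projCLM G '' K ∩ E) (ballIn E) ≤ D * D := by
  refine geomDist_ballIn_le_mul_self hD (fun y ⟨hyE, hy⟩ => ⟨?_, E.smul_mem _ hyE⟩) ?_
  · refine mem_image_projCLM_of_norm_le hK (fun w hw => norm_le_of_diam_le
      (hK.isBounded_polarBody.subset inter_subset_left) ⟨fun x _ => by simp, G.zero_mem⟩ hw hpolar)
      (hEG (E.smul_mem _ hyE)) ?_
    rw [mem_closedBall_zero_iff] at hy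
    rwa [norm_smul, Real.norm_of_nonneg (inv_pos.2 hD).le, mul_right_comm, inv_mul_cancel₀ hD.ne',
      one_mul]
  · rw [image_projCLM_inter_eq hEG]
    rintro _ ⟨x, hx, rfl⟩
    refine ⟨E.starProjection_apply_mem x, (norm_starProjection_apply_le E x).trans ?_⟩
    exact norm_le_of_diam_le (hK.1.isBounded.subset inter_subset_left)
      ⟨hK.zero_mem, zero_mem _⟩ hx hbody

theorem geomDist_image_projCLM_ballIn_le {K : Set (Euc n)} (hK : IsSymmConvexBody K)
    {E F : Submodule ℝ (Euc n)} (hEF : E ≤ F) {D : ℝ} (hD : 0 < D)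
    (hbody : diam (K ∩ F) ≤ D) (hpolar : diam (polarBody K ∩ flagPartner (F, E)) ≤ D) :
    geomDist (projCLM E '' (K ∩ F)) (ballIn E) ≤ D * D := by
  have hEH : E ≤ flagPartner (F, E) := le_sup_left
  rw [← flagPartner_flagPartner hEF, ← image_projCLM_inter_eq hEH]
  exact geomDist_image_projCLM_inter_ballIn_le hK hEH hD hpolar
    (by rwa [flagPartner_flagPartner hEF])

end Duality

theorem one_sub_ofReal_two_mul_le_measure {α : Type*} [MeasurableSpace α] {μ : Measure α}
    {A B₁ B₂ S : Set α} {ε : ℝ} (hA : μ A = 1) (h₁ : μ B₁ ≤ ENNReal.ofReal ε)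
    (h₂ : μ B₂ ≤ ENNReal.ofReal ε) (hS : ∀ x ∈ A, x ∉ B₁ → x ∉ B₂ → x ∈ S) :
    1 - ENNReal.ofReal (2 * ε) ≤ μ S := by
  have hAS : A ⊆ S ∪ (B₁ ∪ B₂) := fun x hx => by
    by_cases hx₁ : x ∈ B₁
    · exact Or.inr (Or.inl hx₁)
    by_cases hx₂ : x ∈ B₂
    · exact Or.inr (Or.inr hx₂)
    exact Or.inl (hS x hx hx₁ hx₂)
  rw [tsub_le_iff_right, ENNReal.ofReal_mul zero_le_two, ENNReal.ofReal_ofNat, two_mul]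
  calc 1 = μ A := hA.symm
    _ ≤ μ (S ∪ (B₁ ∪ B₂)) := measure_mono hAS
    _ ≤ μ S + (μ B₁ + μ B₂) :=
      (measure_union_le _ _).trans (by gcongr; exact measure_union_le _ _)
    _ ≤ μ S + (ENNReal.ofReal ε + ENNReal.ofReal ε) := by gcongr

theorem PTypicalPosition.measure_preimage_le {n k : ℕ} {α Pbar c : ℝ} {K : Set (Euc n)}
    (hK : PTypicalPosition n α Pbar c K) (hk : 1 ≤ k) (hkn : k ≤ n) {β : Type*} [MeasurableSpace β]
    {μ : Measure β} {f : β → Submodule ℝ (Euc n)} (hf : Measurable f)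
    (hσ : IsHaarGrassmannian n (n - k + 1) (μ.map f)) (L : Set (Euc n))
    (hL : L ∈ ({K, polarBody K} : Set (Set (Euc n)))) :
    μ (f ⁻¹' {F | Pbar * ((n : ℝ) / k) ^ α < diam (L ∩ F)}) ≤
      ENNReal.ofReal (Real.exp (-(c * k))) :=
  (Measure.le_map_apply hf.aemeasurable _).trans (hK k hk hkn _ hσ L hL)

theorem mul_rpow_mul_self_le {P C α x : ℝ} (hP : 0 ≤ P) (hPC : P ≤ C / √(α - 1 / 2))
    (hα : 1 / 2 < α) (hx : 0 < x) :
    P * x ^ α * (P * x ^ α) ≤ 2 * C ^ 2 * (2 * α - 1)⁻¹ * x ^ (2 * α) := by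
  have hδ : 0 < α - 1 / 2 := by linarith
  have hP2 : P ^ 2 ≤ C ^ 2 / (α - 1 / 2) := by
    calc P ^ 2 ≤ (C / √(α - 1 / 2)) ^ 2 := pow_le_pow_left₀ hP hPC 2
      _ = C ^ 2 / (α - 1 / 2) := by rw [div_pow, Real.sq_sqrt hδ.le]
  calc P * x ^ α * (P * x ^ α) = P ^ 2 * x ^ (2 * α) := by
        rw [two_mul, Real.rpow_add hx]; ring
    _ ≤ C ^ 2 / (α - 1 / 2) * x ^ (2 * α) := by gcongr
    _ = 2 * C ^ 2 * (2 * α - 1)⁻¹ * x ^ (2 * α) := by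
        rw [show 2 * α - 1 = 2 * (α - 1 / 2) by ring]
        field_simp

theorem stmt2 :
    ∀ C : ℝ, 0 < C → ∃ C' : ℝ, 0 < C' ∧
      ∀ c : ℝ, 0 < c →
        ∀ n k : ℕ, 1 ≤ k → 2 * k ≤ n →
          ∀ α : ℝ, 1 / 2 < α →
            ∀ (K Kbar : Set (Euc n)), IsSymmConvexBody K →
              (∃ T : Euc n ≃ₗ[ℝ] Euc n, Kbar = ⇑T '' K) →
              ∀ Pbar : ℝ, 0 < Pbar → Pbar ≤ C / Real.sqrt (α - 1 / 2) →
                PTypicalPosition n α Pbar c Kbar →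
                ∀ μ : Measure (Submodule ℝ (Euc n) × Submodule ℝ (Euc n)), IsHaarFlag n k μ →
                  (1 : ℝ≥0∞) - ENNReal.ofReal (2 * Real.exp (-(c * k))) ≤
                    μ {p : Submodule ℝ (Euc n) × Submodule ℝ (Euc n) |
                        geomDist ((⇑(projCLM p.1) '' Kbar) ∩ (p.2 : Set (Euc n))) (ballIn p.2)
                          ≤ C' * (2 * α - 1)⁻¹ * ((n : ℝ) / k) ^ (2 * α)} ∧
                  (1 : ℝ≥0∞) - ENNReal.ofReal (2 * Real.exp (-(c * k))) ≤
                    μ {p : Submodule ℝ (Euc n) × Submodule ℝ (Euc n) |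
                        geomDist (⇑(projCLM p.2) '' (Kbar ∩ (p.1 : Set (Euc n)))) (ballIn p.2)
                          ≤ C' * (2 * α - 1)⁻¹ * ((n : ℝ) / k) ^ (2 * α)} := by
  intro C _
  refine ⟨2 * C ^ 2, by positivity, ?_⟩
  intro c _ n k hk hkn α hα K Kbar hK ⟨T, hKbar⟩ Pbar hP hPC hPT μ hμ
  subst hKbar
  have hKT := hK.image T
  have hnk : (0 : ℝ) < n / k := div_pos (by norm_cast; omega) (by norm_cast)
  have hD : 0 < Pbar * ((n : ℝ) / k) ^ α := by positivity
  have hDD := mul_rpow_mul_self_le hP.le hPC hα hnk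
  have hfst := hPT.measure_preimage_le hk (by omega) measurable_fst hμ.isHaarGrassmannian_map_fst
  have hpartner := hPT.measure_preimage_le hk (by omega) measurable_flagPartner
    (hμ.isHaarGrassmannian_map_flagPartner hkn)
  constructor
  · refine one_sub_ofReal_two_mul_le_measure hμ.2.1 (hfst (polarBody (T '' K)) (by simp))
      (hpartner (T '' K) (by simp)) ?_
    rintro ⟨F, E⟩ ⟨-, -, hEF⟩ h₁ h₂
    exact (geomDist_image_projCLM_inter_ballIn_le hKT hEF hD (not_lt.1 h₁) (not_lt.1 h₂)).trans hDD
  · refine one_sub_ofReal_two_mul_le_measure hμ.2.1 (hfst (T '' K) (by simp))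
      (hpartner (polarBody (T '' K)) (by simp)) ?_
    rintro ⟨F, E⟩ ⟨-, -, hEF⟩ h₁ h₂
    exact (geomDist_image_projCLM_ballIn_le hKT hEF hD (not_lt.1 h₁) (not_lt.1 h₂)).trans hDD
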